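/- Let N ≥ 1, 1 ≤ k ≤ N, d = ⌊N/k⌋ and r = N - k·d. Then D(N,k) is isomorphic as a real Lie algebra to the direct sum of (k - r) copies of u(d) and r copies of u(d+1). In particular, dim D(N,k) = k·d² + 2·r·d + r = d·(N + r) + r. -/

import Mathlib

open Matrix
attribute [local instance] LieRing.ofAssociativeRing

lemma banded_mul {N k : ℕ} {A B : Matrix (Fin N) (Fin N) ℂ}
    (hA : ∀ i j : Fin N, ¬ ((k : ℤ) ∣ ((i : ℤ) - (j : ℤ))) → A i j = 0)
    (hB : ∀ i j : Fin N, ¬ ((k : ℤ) ∣ ((i : ℤ) - (j : ℤ))) → B i j = 0) :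
    ∀ i j : Fin N, ¬ ((k : ℤ) ∣ ((i : ℤ) - (j : ℤ))) → (A * B) i j = 0 := by
  intro i j h
  rw [Matrix.mul_apply]
  apply Finset.sum_eq_zero
  intro x _
  by_cases h1 : (k : ℤ) ∣ ((i : ℤ) - (x : ℤ))
  · by_cases h2 : (k : ℤ) ∣ ((x : ℤ) - (j : ℤ))
    · exact absurd (by have := dvd_add h1 h2; simpa using this) h
    · rw [hB x j h2, mul_zero]
  · rw [hA i x h1, zero_mul]

/-- `D(N,k)`: skew-Hermitian `N × N` matrices supported on the diagonals at
integer multiples of `k`, as a real Lie subalgebra. -/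
def DSub (N k : ℕ) : LieSubalgebra ℝ (Matrix (Fin N) (Fin N) ℂ) where
  carrier := {A | Aᴴ = -A ∧ ∀ i j : Fin N, ¬ ((k : ℤ) ∣ ((i : ℤ) - (j : ℤ))) → A i j = 0}
  add_mem' := by
    intro A B hA hB
    refine ⟨?_, ?_⟩
    · simp only [Matrix.conjTranspose_add, hA.1, hB.1]; abel
    · intro i j h
      simp [Matrix.add_apply, hA.2 i j h, hB.2 i j h]
  zero_mem' := by exact ⟨by simp, fun i j _ => rfl⟩
  smul_mem' := by
    intro c A hA
    refine ⟨by simp [Matrix.conjTranspose_smul, hA.1], fun i j h => ?_⟩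
    simp [Matrix.smul_apply, hA.2 i j h]
  lie_mem' := by
    intro A B hA hB
    refine ⟨?_, ?_⟩
    · simp only [Ring.lie_def, Matrix.conjTranspose_sub, Matrix.conjTranspose_mul, hA.1, hB.1]
      noncomm_ring
    · intro i j h
      simp only [Ring.lie_def, Matrix.sub_apply]
      rw [banded_mul hA.2 hB.2 i j h, banded_mul hB.2 hA.2 i j h, sub_zero]

/-- The direct sum of the unitary Lie algebras `u(sz a)`, `a : Fin k`, realized as the
real Lie subalgebra of componentwise skew-Hermitian tuples inside the product of the
matrix algebras. -/
def uPiSub (k : ℕ) (sz : Fin k → ℕ) :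
    LieSubalgebra ℝ (∀ a : Fin k, Matrix (Fin (sz a)) (Fin (sz a)) ℂ) where
  carrier := {f | ∀ a : Fin k, (f a)ᴴ = -(f a)}
  add_mem' := by
    intro f g hf hg a
    simp only [Pi.add_apply, Matrix.conjTranspose_add, hf a, hg a]
    abel
  zero_mem' := by intro a; simp
  smul_mem' := by
    intro c f hf a
    simp [Pi.smul_apply, Matrix.conjTranspose_smul, hf a]
  lie_mem' := by
    intro f g hf hg a
    simp only [Ring.lie_def, Pi.sub_apply, Pi.mul_apply, Matrix.conjTranspose_sub,
      Matrix.conjTranspose_mul, hf a, hg a]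
    noncomm_ring

/-! Ordering `Fin N` by residue class modulo `k`, via `⟨a, s⟩ ↦ a + s * k`, turns a matrix
supported on the diagonals at multiples of `k` into a block-diagonal matrix with one block per
residue class `a`, of size `d + 1` if `a < r` and `d` otherwise. Reindexing after the
block-diagonal embedding is an injective algebra map commuting with `ᴴ` whose image is exactly
the banded matrices, so it restricts to a Lie isomorphism between the skew-Hermitian parts.
For the dimension, multiplication by `i` exchanges Hermitian and skew-Hermitian matrices, so
`u(n)` has half the real dimension `2 n²` of all complex `n × n` matrices. -/

namespace Matrix

variable {R α ι n : Type*} {o : ι → Type*} [DecidableEq ι]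

theorem exists_blockDiagonal'_eq_iff [Zero α] {M : Matrix (Σ a, o a) (Σ a, o a) α} :
    (∃ B, blockDiagonal' B = M) ↔ ∀ p q : Σ a, o a, p.1 ≠ q.1 → M p q = 0 := by
  refine ⟨?_, fun hM => ⟨blockDiag' M, ?_⟩⟩
  · rintro ⟨B, rfl⟩ ⟨a, s⟩ ⟨b, t⟩ hab
    exact blockDiagonal'_apply_ne B s t hab
  · ext ⟨a, s⟩ ⟨b, t⟩
    by_cases hab : a = b
    · subst hab
      rw [blockDiagonal'_apply_eq, blockDiag'_apply]
    · rw [blockDiagonal'_apply_ne _ _ _ hab, hM _ _ hab]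

variable [CommSemiring R] [Semiring α] [Algebra R α]
  [Fintype ι] [∀ a, Fintype (o a)] [∀ a, DecidableEq (o a)]

variable (R α o) in
def blockDiagonal'AlgHom : (∀ a, Matrix (o a) (o a) α) →ₐ[R] Matrix (Σ a, o a) (Σ a, o a) α :=
  { blockDiagonal'RingHom o α with
    commutes' c := by
      change blockDiagonal' (fun a => algebraMap R (Matrix (o a) (o a) α) c) = _
      simp only [algebraMap_eq_diagonal, blockDiagonal'_diagonal]
      rfl }

variable (R) in
noncomputable def reindexedBlockDiagonal [Fintype n] [DecidableEq n] (e : (Σ a, o a) ≃ n) :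
    (∀ a, Matrix (o a) (o a) α) →ₐ[R] Matrix n n α :=
  (reindexAlgEquiv R α e).toAlgHom.comp (blockDiagonal'AlgHom R α o)

variable [Fintype n] [DecidableEq n] (e : (Σ a, o a) ≃ n)

theorem reindexedBlockDiagonal_apply (B : ∀ a, Matrix (o a) (o a) α) :
    reindexedBlockDiagonal R e B = reindex e e (blockDiagonal' B) := rfl

theorem reindexedBlockDiagonal_injective :
    Function.Injective (reindexedBlockDiagonal R e : (∀ a, Matrix (o a) (o a) α) → _) :=
  (reindex e e).injective.comp blockDiagonal'_injective

theorem conjTranspose_reindexedBlockDiagonal [StarRing α] (B : ∀ a, Matrix (o a) (o a) α) :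
    (reindexedBlockDiagonal R e B)ᴴ = reindexedBlockDiagonal R e (fun a => (B a)ᴴ) := by
  simp only [reindexedBlockDiagonal_apply, conjTranspose_reindex, blockDiagonal'_conjTranspose]

theorem exists_reindexedBlockDiagonal_eq_iff {A : Matrix n n α} :
    (∃ B, reindexedBlockDiagonal R e B = A) ↔
      ∀ p q : Σ a, o a, p.1 ≠ q.1 → A (e p) (e q) = 0 := by
  simp only [reindexedBlockDiagonal_apply, ← Equiv.eq_symm_apply, exists_blockDiagonal'_eq_iff]
  rfl

end Matrix

section ComplexStarModule

variable {A : Type*} [AddCommGroup A] [Module ℂ A] [StarAddMonoid A] [StarModule ℂ A]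

noncomputable def skewAdjoint.negISMulEquiv : skewAdjoint A ≃ₗ[ℝ] selfAdjoint A :=
  LinearEquiv.ofBijective skewAdjoint.negISMul
    ⟨fun a b h => by simpa using congrArg (fun x : selfAdjoint A => Complex.I • (x : A)) h,
     fun b => ⟨⟨Complex.I • (b : A), by simp⟩, by ext; simp [smul_smul]⟩⟩

theorem finrank_real_eq_two_mul_finrank_skewAdjoint [FiniteDimensional ℝ A] :
    Module.finrank ℝ A = 2 * Module.finrank ℝ (skewAdjoint A) := by
  have := Module.Finite.equiv (StarModule.decomposeProdAdjoint ℝ A)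
  have : Module.Finite ℝ (selfAdjoint A) :=
    Module.Finite.of_surjective (LinearMap.fst ℝ _ (skewAdjoint A)) Prod.fst_surjective
  have : Module.Finite ℝ (skewAdjoint A) :=
    Module.Finite.of_surjective (LinearMap.snd ℝ (selfAdjoint A) _) Prod.snd_surjective
  rw [(StarModule.decomposeProdAdjoint ℝ A).finrank_eq, Module.finrank_prod,
    skewAdjoint.negISMulEquiv.symm.finrank_eq]
  ring

end ComplexStarModule

namespace uPiSub

noncomputable def linearEquivSkewAdjoint (k : ℕ) (sz : Fin k → ℕ) :
    uPiSub k sz ≃ₗ[ℝ] skewAdjoint (∀ a, Matrix (Fin (sz a)) (Fin (sz a)) ℂ) where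
  toFun B := ⟨B, funext B.2⟩
  invFun B := ⟨B, congrFun B.2⟩
  map_add' _ _ := rfl
  map_smul' _ _ := rfl
  left_inv _ := rfl
  right_inv _ := rfl

theorem finrank_eq (k : ℕ) (sz : Fin k → ℕ) :
    Module.finrank ℝ (uPiSub k sz) = ∑ a, sz a ^ 2 := by
  have h := finrank_real_eq_two_mul_finrank_skewAdjoint
    (A := ∀ a, Matrix (Fin (sz a)) (Fin (sz a)) ℂ)
  rw [Module.finrank_pi_fintype, ← (linearEquivSkewAdjoint k sz).finrank_eq] at h
  simp only [Module.finrank_matrix, Fintype.card_fin, Complex.finrank_real_complex] at h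
  rw [← Finset.sum_mul] at h
  simp only [sq]
  omega

theorem mem_iff_reindexedBlockDiagonal {k n : ℕ} {sz : Fin k → ℕ}
    (e : (Σ a, Fin (sz a)) ≃ Fin n) {B : ∀ a, Matrix (Fin (sz a)) (Fin (sz a)) ℂ} :
    B ∈ uPiSub k sz ↔
      (reindexedBlockDiagonal ℝ e B)ᴴ = -reindexedBlockDiagonal ℝ e B := by
  rw [conjTranspose_reindexedBlockDiagonal, ← map_neg,
    (reindexedBlockDiagonal_injective (R := ℝ) e).eq_iff, funext_iff]
  rfl

end uPiSub

def blockSize (k d r : ℕ) (a : Fin k) : ℕ := if (a : ℕ) < r then d + 1 else d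

theorem Fin.sum_ite_val_lt {M : Type*} [AddCommMonoid M] {k r : ℕ} (hr : r ≤ k) (x y : M) :
    ∑ a : Fin k, (if (a : ℕ) < r then x else y) = r • x + (k - r) • y := by
  rw [Finset.sum_ite, Finset.sum_const, Finset.sum_const, Fin.card_filter_val_lt,
    Finset.filter_not, Finset.card_sdiff_of_subset (Finset.filter_subset _ _),
    Fin.card_filter_val_lt, Finset.card_univ, Fintype.card_fin, min_eq_right hr]

theorem sum_blockSize {k d r : ℕ} (hr : r ≤ k) : ∑ a, blockSize k d r a = k * d + r := by
  simp only [blockSize, Fin.sum_ite_val_lt hr, smul_eq_mul]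
  zify [hr]
  ring

theorem sum_blockSize_sq {k d r : ℕ} (hr : r ≤ k) :
    ∑ a, blockSize k d r a ^ 2 = k * d ^ 2 + 2 * r * d + r := by
  simp only [blockSize, apply_ite (· ^ 2), Fin.sum_ite_val_lt hr, smul_eq_mul]
  zify [hr]
  ring

section Residue

variable {N k d r : ℕ}

theorem val_fst_add_val_snd_mul_lt (hN : N = k * d + r)
    (p : Σ a : Fin k, Fin (blockSize k d r a)) : (p.1 : ℕ) + p.2 * k < N := by
  obtain ⟨⟨a, ha⟩, ⟨s, hs⟩⟩ := p
  simp only [blockSize] at hs ⊢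
  split_ifs at hs
  · nlinarith
  · nlinarith

variable (hN : N = k * d + r) (hrk : r ≤ k)

noncomputable def residueEquiv : (Σ a : Fin k, Fin (blockSize k d r a)) ≃ Fin N :=
  Equiv.ofBijective (fun p => ⟨p.1 + p.2 * k, val_fst_add_val_snd_mul_lt hN p⟩) <| by
    refine (Fintype.bijective_iff_injective_and_card _).2 ⟨?_, ?_⟩
    · rintro ⟨a, s⟩ ⟨b, t⟩ h
      have hval : (a : ℕ) + s * k = b + t * k := congrArg Fin.val h
      obtain rfl : a = b := Fin.ext <| by
        simpa [Nat.add_mul_mod_self_right, Nat.mod_eq_of_lt a.2, Nat.mod_eq_of_lt b.2] using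
          congrArg (· % k) hval
      obtain rfl : s = t := Fin.ext <| Nat.eq_of_mul_eq_mul_right a.pos (by omega)
      rfl
    · simp [Fintype.card_sigma, sum_blockSize hrk, hN]

theorem residueEquiv_val_mod (p : Σ a : Fin k, Fin (blockSize k d r a)) :
    (residueEquiv hN hrk p : ℕ) % k = p.1 := by
  simp [residueEquiv, Nat.add_mul_mod_self_right, Nat.mod_eq_of_lt p.1.2]

theorem intCast_dvd_residueEquiv_sub_iff (p q : Σ a : Fin k, Fin (blockSize k d r a)) :
    (k : ℤ) ∣ ((residueEquiv hN hrk p : ℕ) : ℤ) - ((residueEquiv hN hrk q : ℕ) : ℤ) ↔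
      p.1 = q.1 := by
  rw [← Nat.modEq_iff_dvd, Nat.ModEq, residueEquiv_val_mod, residueEquiv_val_mod, eq_comm,
    Fin.val_inj]

theorem banded_iff_residueEquiv {A : Matrix (Fin N) (Fin N) ℂ} :
    (∀ i j : Fin N, ¬ ((k : ℤ) ∣ ((i : ℤ) - (j : ℤ))) → A i j = 0) ↔
      ∀ p q, p.1 ≠ q.1 → A (residueEquiv hN hrk p) (residueEquiv hN hrk q) = 0 := by
  refine ⟨fun hA p q hpq => hA _ _ ?_, fun hA i j hij => ?_⟩
  · rwa [intCast_dvd_residueEquiv_sub_iff]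
  · obtain ⟨p, rfl⟩ := (residueEquiv hN hrk).surjective i
    obtain ⟨q, rfl⟩ := (residueEquiv hN hrk).surjective j
    exact hA p q (by rwa [intCast_dvd_residueEquiv_sub_iff] at hij)

theorem mem_DSub_iff_exists {A : Matrix (Fin N) (Fin N) ℂ} :
    A ∈ DSub N k ↔ ∃ B ∈ uPiSub k (blockSize k d r),
      reindexedBlockDiagonal ℝ (residueEquiv hN hrk) B = A := by
  constructor
  · rintro ⟨hskew, hband⟩
    obtain ⟨B, rfl⟩ := (exists_reindexedBlockDiagonal_eq_iff (R := ℝ) _).2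
      ((banded_iff_residueEquiv hN hrk).1 hband)
    exact ⟨B, (uPiSub.mem_iff_reindexedBlockDiagonal _).2 hskew, rfl⟩
  · rintro ⟨B, hB, rfl⟩
    exact ⟨(uPiSub.mem_iff_reindexedBlockDiagonal _).1 hB, (banded_iff_residueEquiv hN hrk).2
      ((exists_reindexedBlockDiagonal_eq_iff (R := ℝ) _).1 ⟨B, rfl⟩)⟩

noncomputable def DSub.lieEquivUPiSub : DSub N k ≃ₗ⁅ℝ⁆ uPiSub k (blockSize k d r) :=
  let φ : uPiSub k (blockSize k d r) →ₗ⁅ℝ⁆ Matrix (Fin N) (Fin N) ℂ :=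
    (reindexedBlockDiagonal ℝ (residueEquiv hN hrk)).toLieHom.comp (uPiSub k _).incl
  have hφ : Function.Injective φ := fun _ _ h => Subtype.ext <|
    reindexedBlockDiagonal_injective (R := ℝ) (residueEquiv hN hrk) (by simpa [φ] using h)
  have hrange : (φ.range : Set (Matrix (Fin N) (Fin N) ℂ)) = DSub N k := by
    ext A
    simp [φ, mem_DSub_iff_exists hN hrk]
  ((LieEquiv.ofInjective φ hφ).trans (LieEquiv.ofEq _ _ hrange)).symm

end Residue

theorem DSub_structure_general (N k : ℕ) (hk : 1 ≤ k)
    (d r : ℕ) (hd : d = N / k) (hr : r = N - k * d) :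
    Nonempty (↥(DSub N k) ≃ₗ⁅ℝ⁆
      ↥(uPiSub k (fun a : Fin k => if (a : ℕ) < r then d + 1 else d))) ∧
    Module.finrank ℝ ↥(DSub N k) = k * d ^ 2 + 2 * r * d + r ∧
    k * d ^ 2 + 2 * r * d + r = d * (N + r) + r := by
  have hdiv : k * d + N % k = N := hd ▸ Nat.div_add_mod N k
  have hN : N = k * d + r := by omega
  have hrk : r ≤ k := by have := Nat.mod_lt N hk; omega
  refine ⟨⟨DSub.lieEquivUPiSub hN hrk⟩, ?_, by rw [hN]; ring⟩
  rw [(DSub.lieEquivUPiSub hN hrk).toLinearEquiv.finrank_eq, uPiSub.finrank_eq,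
    sum_blockSize_sq hrk]

/-- Theorem 1 of the paper: with `d = ⌊N/k⌋` and `r = N - k·d`,
`D(N,k) ≅ u(d)^(k-r) ⊕ u(d+1)^r` as real Lie algebras (the first `r` blocks have size
`d+1` and the remaining `k - r` blocks have size `d`), and
`dim D(N,k) = k·d² + 2·r·d + r = d·(N + r) + r`. -/
theorem DSub_structure (N k : ℕ) (hN : 1 ≤ N) (hk : 1 ≤ k) (hkN : k ≤ N)
    (d r : ℕ) (hd : d = N / k) (hr : r = N - k * d) :
    Nonempty (↥(DSub N k) ≃ₗ⁅ℝ⁆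
      ↥(uPiSub k (fun a : Fin k => if (a : ℕ) < r then d + 1 else d))) ∧
    Module.finrank ℝ ↥(DSub N k) = k * d ^ 2 + 2 * r * d + r ∧
    k * d ^ 2 + 2 * r * d + r = d * (N + r) + r :=
  DSub_structure_general N k hk d r hd hr
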